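/- arXiv:1808.05634 — 4 statements merged into one kernel-verified Lean document; each statement's English description precedes it below -/
import Mathlib

section
/- The function Z(x_φ, x_ψ, y) = x_φ² - x_ψ² + y² - 1 satisfies Z' = αZ along the flow of the flat quintom system, where α = x_φ² - x_ψ² - y² and the derivatives are x_φ' = (1/3)(3my² + (q-2)x_φ), x_ψ' = -(1/3)(3ny² - (q-2)x_ψ), y' = (1/3)(1 + q - 3(m x_φ + n x_ψ))y with q = (1/2)(3(x_φ² - x_ψ² - y²) + 1). Consequently the set {x_φ² - x_ψ² + y² ≤ 1} is invariant under the flow. -/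
/-! Substituting `q` into the chain rule gives `Z' = α Z` for `Z = xφ² - xψ² + y² - 1`. For any
primitive `A` of `α`, `Z * exp (-A)` then has derivative zero, so `Z` keeps the sign it has at `t₀`. -/

open Real

lemma mul_exp_neg_eq_of_hasDerivAt_mul_self {Z A α : ℝ → ℝ}
    (hA : ∀ t, HasDerivAt A (α t) t) (hZ : ∀ t, HasDerivAt Z (α t * Z t) t) (s t : ℝ) :
    Z t * exp (-A t) = Z s * exp (-A s) := by
  have hW : ∀ u, HasDerivAt (fun u => Z u * exp (-A u)) 0 u := fun u =>
    ((hZ u).mul (hA u).neg.exp).congr_deriv (by ring)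
  exact is_const_of_deriv_eq_zero (fun u => (hW u).differentiableAt) (fun u => (hW u).deriv) t s

lemma nonpos_of_hasDerivAt_mul_self {Z α : ℝ → ℝ} (hα : Continuous α)
    (hZ : ∀ t, HasDerivAt Z (α t * Z t) t) {t₀ : ℝ} (h₀ : Z t₀ ≤ 0) (t : ℝ) : Z t ≤ 0 := by
  have hA : ∀ t, HasDerivAt (fun u => ∫ s in t₀..u, α s) (α t) t := fun t =>
    (hα.integral_hasStrictDerivAt t₀ t).hasDerivAt
  have hconst := mul_exp_neg_eq_of_hasDerivAt_mul_self hA hZ t₀ t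
  have : Z t * exp (-∫ s in t₀..t, α s) ≤ 0 :=
    hconst ▸ mul_nonpos_of_nonpos_of_nonneg h₀ (exp_pos _).le
  exact nonpos_of_mul_nonpos_left this (exp_pos _)

theorem stmt_0 (m n : ℝ) (xφ xψ y : ℝ → ℝ) (q : ℝ → ℝ)
    (hq : ∀ t, q t = (1/2) * (3 * ((xφ t)^2 - (xψ t)^2 - (y t)^2) + 1))
    (hφ : ∀ t, HasDerivAt xφ ((1/3) * (3 * m * (y t)^2 + (q t - 2) * xφ t)) t)
    (hψ : ∀ t, HasDerivAt xψ (-(1/3) * (3 * n * (y t)^2 - (q t - 2) * xψ t)) t)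
    (hy : ∀ t, HasDerivAt y ((1/3) * (1 + q t - 3 * (m * xφ t + n * xψ t)) * y t) t) :
    (∀ t, HasDerivAt (fun s => (xφ s)^2 - (xψ s)^2 + (y s)^2 - 1)
      (((xφ t)^2 - (xψ t)^2 - (y t)^2) * ((xφ t)^2 - (xψ t)^2 + (y t)^2 - 1)) t) ∧
    (∀ t₀, (xφ t₀)^2 - (xψ t₀)^2 + (y t₀)^2 ≤ 1 →
      ∀ t, (xφ t)^2 - (xψ t)^2 + (y t)^2 ≤ 1) := by
  have hZ : ∀ t, HasDerivAt (fun s => (xφ s)^2 - (xψ s)^2 + (y s)^2 - 1)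
      (((xφ t)^2 - (xψ t)^2 - (y t)^2) * ((xφ t)^2 - (xψ t)^2 + (y t)^2 - 1)) t := fun t =>
    ((((hφ t).pow 2).sub ((hψ t).pow 2)).add ((hy t).pow 2)).sub_const 1 |>.congr_deriv
      (by rw [hq t]; push_cast; ring)
  refine ⟨hZ, fun t₀ h₀ t => ?_⟩
  have hα : Continuous fun s => (xφ s)^2 - (xψ s)^2 - (y s)^2 :=
    have hcont {f f' : ℝ → ℝ} (hf : ∀ t, HasDerivAt f (f' t) t) : Continuous f :=
      Differentiable.continuous fun t => (hf t).differentiableAt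
    (((hcont hφ).pow 2).sub ((hcont hψ).pow 2)).sub ((hcont hy).pow 2)
  have := nonpos_of_hasDerivAt_mul_self hα hZ (t₀ := t₀) (by linarith) t
  linarith
end

section
/- On the invariant set y = 0, z = 0 with 0 < x_φ² - x_ψ² < 1, the deceleration factor q = (1/2)(3(x_φ² - x_ψ²) + 1) satisfies 1/2 < q < 2, and the function W₄ = (n x_φ + m x_ψ)⁴/(1 - x_φ² + x_ψ²)² satisfies W₄' = (4(q-2))/(3(1 - x_φ² + x_ψ²)) · W₄ < 0 whenever n x_φ + m x_ψ ≠ 0; i.e., W₄ is strictly decreasing along such orbits. -/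
/-!
On the plane `y = z = 0` both coordinates are rescaled at the common rate `λ = (q - 2)/3`, so
`u = n x_φ + m x_ψ` satisfies `u' = λ u` while `D = 1 - x_φ² + x_ψ²` satisfies `D' = 2λ (D - 1)`.
Hence `(u⁴/D²)'/(u⁴/D²) = 4λ - 4λ (D - 1)/D = 4λ/D`, which is negative because `q < 2` and `D > 0`.
-/

section CommonRate

variable {f g : ℝ → ℝ} {c t : ℝ}

theorem HasDerivAt.linear_comb_of_common_rate (a b : ℝ) (hf : HasDerivAt f (c * f t) t)
    (hg : HasDerivAt g (c * g t) t) :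
    HasDerivAt (fun s => a * f s + b * g s) (c * (a * f t + b * g t)) t := by
  refine ((hf.const_mul a).fun_add (hg.const_mul b)).congr_deriv ?_
  ring

theorem HasDerivAt.one_sub_sq_add_sq_of_common_rate (hf : HasDerivAt f (c * f t) t)
    (hg : HasDerivAt g (c * g t) t) :
    HasDerivAt (fun s => 1 - f s ^ 2 + g s ^ 2) (2 * c * ((1 - f t ^ 2 + g t ^ 2) - 1)) t := by
  refine (((hasDerivAt_const t 1).fun_sub (hf.fun_pow 2)).fun_add (hg.fun_pow 2)).congr_deriv ?_
  push_cast
  ring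

theorem HasDerivAt.pow_four_div_sq {u D : ℝ → ℝ} (hu : HasDerivAt u (c * u t) t)
    (hD : HasDerivAt D (2 * c * (D t - 1)) t) (hD0 : D t ≠ 0) :
    HasDerivAt (fun s => u s ^ 4 / D s ^ 2) (4 * c / D t * (u t ^ 4 / D t ^ 2)) t := by
  refine ((hu.fun_pow 4).fun_div (hD.fun_pow 2) (pow_ne_zero 2 hD0)).congr_deriv ?_
  push_cast
  field_simp
  ring

end CommonRate

theorem stmt_4 (m n : ℝ) (xφ xψ : ℝ → ℝ) (q : ℝ → ℝ)
    (hq : ∀ t, q t = (1/2) * (3 * ((xφ t)^2 - (xψ t)^2) + 1))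
    (hφ : ∀ t, HasDerivAt xφ ((1/3) * (q t - 2) * xφ t) t)
    (hψ : ∀ t, HasDerivAt xψ ((1/3) * (q t - 2) * xψ t) t) :
    ∀ t, 0 < (xφ t)^2 - (xψ t)^2 → (xφ t)^2 - (xψ t)^2 < 1 →
      (1/2 < q t ∧ q t < 2) ∧
      HasDerivAt (fun s => (n * xφ s + m * xψ s)^4 / (1 - (xφ s)^2 + (xψ s)^2)^2)
        ((4 * (q t - 2)) / (3 * (1 - (xφ t)^2 + (xψ t)^2)) *
          ((n * xφ t + m * xψ t)^4 / (1 - (xφ t)^2 + (xψ t)^2)^2)) t ∧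
      (n * xφ t + m * xψ t ≠ 0 →
        (4 * (q t - 2)) / (3 * (1 - (xφ t)^2 + (xψ t)^2)) *
          ((n * xφ t + m * xψ t)^4 / (1 - (xφ t)^2 + (xψ t)^2)^2) < 0) := by
  intro t hpos hlt1
  have hD : 0 < 1 - xφ t ^ 2 + xψ t ^ 2 := by linarith
  have hq2 : q t < 2 := by rw [hq t]; linarith
  refine ⟨⟨by rw [hq t]; linarith, hq2⟩, ?_, fun hu => ?_⟩
  · have hW := HasDerivAt.pow_four_div_sq ((hφ t).linear_comb_of_common_rate n m (hψ t))
      ((hφ t).one_sub_sq_add_sq_of_common_rate (hψ t)) hD.ne'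
    convert hW using 2
    field_simp
  · have hrate : 4 * (q t - 2) / (3 * (1 - xφ t ^ 2 + xψ t ^ 2)) < 0 :=
      div_neg_of_neg_of_pos (by linarith) (by positivity)
    exact mul_neg_of_neg_of_pos hrate (by positivity)
end

section
/- For the 5-dimensional system D' = −(1/3)(1−D²)Q, U_φ' = −D(1 − Q/3)U_φ + mW², U_ψ' = −D(1 − Q/3)U_ψ − nW², W' = −(−(1/3)DQ + mU_φ + nU_ψ)W, Ω' = −D(−(2/3)Q + γ)Ω, with Q = D² + 2(U_φ² − U_ψ²) − W² + (1/2)(3γ−2)Ω, the function M = (nU_φ + mU_ψ)²Ω³ / [(1−D²)(D² − U_φ² + U_ψ² − W² − Ω)³] satisfies M' = −3γDM wherever M is defined. -/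
/-!
Every factor of `M` obeys a linear equation `f' = a f` along the flow: the `W²` terms cancel in
`(n U_φ + m U_ψ)'`, and the constraint-like quantity `X = D² - U_φ² + U_ψ² - W² - Ω` satisfies
`X' = (2/3) D (Q - 1) X` once `Q` is substituted. Logarithmic derivatives add under products,
powers and quotients, and the exponents of `M` are chosen so that every `Q`-term cancels,
leaving `M'/M = -3γD`.
-/

section LogDeriv

variable {f g : ℝ → ℝ} {a b x : ℝ}

theorem HasDerivAt.pow_of_eq_mul_self (hf : HasDerivAt f (a * f x) x) (k : ℕ) :
    HasDerivAt (fun y => f y ^ k) (k * a * f x ^ k) x := by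
  refine (hf.fun_pow k).congr_deriv ?_
  rcases k with _ | k
  · simp
  · rw [Nat.add_sub_cancel, pow_succ]
    ring

theorem HasDerivAt.mul_of_eq_mul_self (hf : HasDerivAt f (a * f x) x)
    (hg : HasDerivAt g (b * g x) x) :
    HasDerivAt (fun y => f y * g y) ((a + b) * (f x * g x)) x :=
  (hf.fun_mul hg).congr_deriv (by ring)

theorem HasDerivAt.div_of_eq_mul_self (hf : HasDerivAt f (a * f x) x)
    (hg : HasDerivAt g (b * g x) x) (hx : g x ≠ 0) :
    HasDerivAt (fun y => f y / g y) ((a - b) * (f x / g x)) x :=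
  (hf.fun_div hg hx).congr_deriv (by field_simp)

end LogDeriv

section ScalarFieldSystem

variable {m n γ t : ℝ} {D Uφ Uψ W Ω Q : ℝ → ℝ}

theorem hasDerivAt_combination_eq_mul_self
    (hUφ : HasDerivAt Uφ (-(D t) * (1 - Q t / 3) * Uφ t + m * (W t)^2) t)
    (hUψ : HasDerivAt Uψ (-(D t) * (1 - Q t / 3) * Uψ t - n * (W t)^2) t) :
    HasDerivAt (fun s => n * Uφ s + m * Uψ s)
      (-(D t) * (1 - Q t / 3) * (n * Uφ t + m * Uψ t)) t :=
  ((hUφ.const_mul n).fun_add (hUψ.const_mul m)).congr_deriv (by ring)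

theorem hasDerivAt_one_sub_sq_eq_mul_self (hD : HasDerivAt D (-(1/3) * (1 - (D t)^2) * Q t) t) :
    HasDerivAt (fun s => 1 - (D s)^2) ((2/3) * D t * Q t * (1 - (D t)^2)) t :=
  ((hasDerivAt_const t (1:ℝ)).fun_sub (hD.fun_pow 2)).congr_deriv (by push_cast; ring)

theorem hasDerivAt_constraint_eq_mul_self
    (hQ : Q t = (D t)^2 + 2 * ((Uφ t)^2 - (Uψ t)^2) - (W t)^2 + (1/2) * (3*γ - 2) * Ω t)
    (hD : HasDerivAt D (-(1/3) * (1 - (D t)^2) * Q t) t)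
    (hUφ : HasDerivAt Uφ (-(D t) * (1 - Q t / 3) * Uφ t + m * (W t)^2) t)
    (hUψ : HasDerivAt Uψ (-(D t) * (1 - Q t / 3) * Uψ t - n * (W t)^2) t)
    (hW : HasDerivAt W (-(-(1/3) * D t * Q t + m * Uφ t + n * Uψ t) * W t) t)
    (hΩ : HasDerivAt Ω (-(D t) * (-(2/3) * Q t + γ) * Ω t) t) :
    HasDerivAt (fun s => (D s)^2 - (Uφ s)^2 + (Uψ s)^2 - (W s)^2 - Ω s)
      ((2/3) * D t * (Q t - 1) * ((D t)^2 - (Uφ t)^2 + (Uψ t)^2 - (W t)^2 - Ω t)) t := by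
  refine ((((((hD.fun_pow 2).fun_sub (hUφ.fun_pow 2)).fun_add (hUψ.fun_pow 2)).fun_sub
    (hW.fun_pow 2)).fun_sub hΩ)).congr_deriv ?_
  rw [hQ]
  push_cast
  ring

end ScalarFieldSystem

theorem stmt_15 (m n γ : ℝ) (D Uφ Uψ W Ω : ℝ → ℝ) (Q : ℝ → ℝ)
    (hQ : ∀ t, Q t = (D t)^2 + 2 * ((Uφ t)^2 - (Uψ t)^2) - (W t)^2
      + (1/2) * (3*γ - 2) * Ω t)
    (hD : ∀ t, HasDerivAt D (-(1/3) * (1 - (D t)^2) * Q t) t)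
    (hUφ : ∀ t, HasDerivAt Uφ (-(D t) * (1 - Q t / 3) * Uφ t + m * (W t)^2) t)
    (hUψ : ∀ t, HasDerivAt Uψ (-(D t) * (1 - Q t / 3) * Uψ t - n * (W t)^2) t)
    (hW : ∀ t, HasDerivAt W (-(-(1/3) * D t * Q t + m * Uφ t + n * Uψ t) * W t) t)
    (hΩ : ∀ t, HasDerivAt Ω (-(D t) * (-(2/3) * Q t + γ) * Ω t) t) :
    ∀ t, (1 - (D t)^2) * ((D t)^2 - (Uφ t)^2 + (Uψ t)^2 - (W t)^2 - Ω t) ≠ 0 →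
      HasDerivAt (fun s => (n * Uφ s + m * Uψ s)^2 * (Ω s)^3 /
          ((1 - (D s)^2) * ((D s)^2 - (Uφ s)^2 + (Uψ s)^2 - (W s)^2 - Ω s)^3))
        (-3 * γ * D t * ((n * Uφ t + m * Uψ t)^2 * (Ω t)^3 /
          ((1 - (D t)^2) * ((D t)^2 - (Uφ t)^2 + (Uψ t)^2 - (W t)^2 - Ω t)^3))) t := by
  intro t ht
  have hNum := ((hasDerivAt_combination_eq_mul_self (hUφ t) (hUψ t)).pow_of_eq_mul_self 2
    ).mul_of_eq_mul_self ((hΩ t).pow_of_eq_mul_self 3)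
  have hX := hasDerivAt_constraint_eq_mul_self (hQ t) (hD t) (hUφ t) (hUψ t) (hW t) (hΩ t)
  have hDen := (hasDerivAt_one_sub_sq_eq_mul_self (hD t)).mul_of_eq_mul_self
    (hX.pow_of_eq_mul_self 3)
  refine (hNum.div_of_eq_mul_self hDen ?_).congr_deriv ?_
  · exact mul_ne_zero (left_ne_zero_of_mul ht) (pow_ne_zero 3 (right_ne_zero_of_mul ht))
  · push_cast
    ring
end

section
/- For the 4-dimensional positive-curvature quintom system Q₀' = (1−Q₀²)(1 − 3(Û_φ² − Û_ψ² + (γ/2)Ω̂)), Û_φ' = 3mŴ² + 3Q₀Û_φ(−1 + Û_φ² − Û_ψ² + (γ/2)Ω̂), Û_ψ' = −3nŴ² + 3Q₀Û_ψ(−1 + Û_φ² − Û_ψ² + (γ/2)Ω̂), Ŵ' = −3Ŵ(mÛ_φ + nÛ_ψ − Q₀(Û_φ² − Û_ψ² + (γ/2)Ω̂)), where Ω̂ = 1 − (Û_φ² − Û_ψ² + Ŵ²), the function N = (nÛ_φ + mÛ_ψ)²Ω̂² / (1 − Q₀²)³ satisfies N' = −6γQ₀N wherever defined. -/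
/-!
Write `A = n Û_φ + m Û_ψ`, `D = 1 - Q₀²` and `X = Û_φ² - Û_ψ² + (γ/2) Ω̂`.
Along the flow each of `A`, `Ω̂`, `D` has a derivative proportional to itself (the `Ŵ²` terms
cancel in `A'`): `A' = 3 Q₀ (X - 1) A`, `Ω̂' = 6 Q₀ (X - γ/2) Ω̂`, `D' = -2 Q₀ (1 - 3X) D`.
Hence `N = A² Ω̂² / D³` has logarithmic derivative
`6 Q₀ (X - 1) + 12 Q₀ (X - γ/2) + 6 Q₀ (1 - 3X) = -6 γ Q₀`.
-/

section RateLemmas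

variable {𝕜 : Type*} [NontriviallyNormedField 𝕜] {f g : 𝕜 → 𝕜} {a b x : 𝕜}

theorem HasDerivAt.pow_of_deriv_eq_mul (hf : HasDerivAt f (a * f x) x) (k : ℕ) :
    HasDerivAt (fun s => f s ^ k) (k * a * f x ^ k) x := by
  refine (hf.pow k).congr_deriv ?_
  cases k with
  | zero => simp
  | succ k => push_cast; ring

theorem HasDerivAt.mul_of_deriv_eq_mul (hf : HasDerivAt f (a * f x) x)
    (hg : HasDerivAt g (b * g x) x) :
    HasDerivAt (fun s => f s * g s) ((a + b) * (f x * g x)) x :=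
  (hf.mul hg).congr_deriv (by ring)

theorem HasDerivAt.div_of_deriv_eq_mul (hf : HasDerivAt f (a * f x) x)
    (hg : HasDerivAt g (b * g x) x) (hx : g x ≠ 0) :
    HasDerivAt (fun s => f s / g s) ((a - b) * (f x / g x)) x :=
  (hf.div hg hx).congr_deriv (by field_simp)

end RateLemmas

section QuintomFlow

variable {m n γ q w c t : ℝ} {Q0 Uφ Uψ W Ω : ℝ → ℝ}

theorem hasDerivAt_one_sub_sq_of_deriv_eq_mul {r : ℝ}
    (hQ0 : HasDerivAt Q0 ((1 - Q0 t ^ 2) * r) t) :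
    HasDerivAt (fun s => 1 - Q0 s ^ 2) (-2 * Q0 t * r * (1 - Q0 t ^ 2)) t :=
  ((hQ0.pow 2).const_sub 1).congr_deriv (by push_cast; ring)

theorem hasDerivAt_quintom_nUφ_add_mUψ
    (hUφ : HasDerivAt Uφ (3 * m * w ^ 2 + 3 * q * Uφ t * c) t)
    (hUψ : HasDerivAt Uψ (-3 * n * w ^ 2 + 3 * q * Uψ t * c) t) :
    HasDerivAt (fun s => n * Uφ s + m * Uψ s) (3 * q * c * (n * Uφ t + m * Uψ t)) t :=
  ((hUφ.const_mul n).add (hUψ.const_mul m)).congr_deriv (by ring)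

theorem hasDerivAt_quintom_omega
    (hΩ : ∀ s, Ω s = 1 - ((Uφ s)^2 - (Uψ s)^2 + (W s)^2))
    (hUφ : HasDerivAt Uφ
      (3 * m * (W t)^2 + 3 * q * Uφ t * (-1 + (Uφ t)^2 - (Uψ t)^2 + (γ/2) * Ω t)) t)
    (hUψ : HasDerivAt Uψ
      (-3 * n * (W t)^2 + 3 * q * Uψ t * (-1 + (Uφ t)^2 - (Uψ t)^2 + (γ/2) * Ω t)) t)
    (hW : HasDerivAt W
      (-3 * W t * (m * Uφ t + n * Uψ t - q * ((Uφ t)^2 - (Uψ t)^2 + (γ/2) * Ω t))) t) :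
    HasDerivAt Ω (6 * q * ((Uφ t)^2 - (Uψ t)^2 + (γ/2) * Ω t - γ/2) * Ω t) t := by
  rw [show Ω = fun s => 1 - ((Uφ s)^2 - (Uψ s)^2 + (W s)^2) from funext hΩ] at hUφ hUψ hW ⊢
  exact ((((hUφ.pow 2).sub (hUψ.pow 2)).add (hW.pow 2)).const_sub 1).congr_deriv
    (by push_cast; ring)

end QuintomFlow

theorem stmt_16 (m n γ : ℝ) (Q0 Uφ Uψ W : ℝ → ℝ) (Ω : ℝ → ℝ)
    (hΩ : ∀ t, Ω t = 1 - ((Uφ t)^2 - (Uψ t)^2 + (W t)^2))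
    (hQ0 : ∀ t, HasDerivAt Q0
      ((1 - (Q0 t)^2) * (1 - 3 * ((Uφ t)^2 - (Uψ t)^2 + (γ/2) * Ω t))) t)
    (hUφ : ∀ t, HasDerivAt Uφ
      (3 * m * (W t)^2 + 3 * Q0 t * Uφ t * (-1 + (Uφ t)^2 - (Uψ t)^2 + (γ/2) * Ω t)) t)
    (hUψ : ∀ t, HasDerivAt Uψ
      (-3 * n * (W t)^2 + 3 * Q0 t * Uψ t * (-1 + (Uφ t)^2 - (Uψ t)^2 + (γ/2) * Ω t)) t)
    (hW : ∀ t, HasDerivAt W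
      (-3 * W t * (m * Uφ t + n * Uψ t - Q0 t * ((Uφ t)^2 - (Uψ t)^2 + (γ/2) * Ω t))) t) :
    ∀ t, (Q0 t)^2 ≠ 1 →
      HasDerivAt (fun s => (n * Uφ s + m * Uψ s)^2 * (Ω s)^2 / (1 - (Q0 s)^2)^3)
        (-6 * γ * Q0 t *
          ((n * Uφ t + m * Uψ t)^2 * (Ω t)^2 / (1 - (Q0 t)^2)^3)) t := by
  intro t hQ0t
  have hA := hasDerivAt_quintom_nUφ_add_mUψ (hUφ t) (hUψ t)
  have hΩ' := hasDerivAt_quintom_omega hΩ (hUφ t) (hUψ t) (hW t)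
  have hD := hasDerivAt_one_sub_sq_of_deriv_eq_mul (hQ0 t)
  have hD0 : (1 - Q0 t ^ 2) ^ 3 ≠ 0 := pow_ne_zero _ (sub_ne_zero.mpr (Ne.symm hQ0t))
  have hNum := (hA.pow_of_deriv_eq_mul 2).mul_of_deriv_eq_mul (hΩ'.pow_of_deriv_eq_mul 2)
  exact (hNum.div_of_deriv_eq_mul (hD.pow_of_deriv_eq_mul 3) hD0).congr_deriv (by push_cast; ring)
end
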